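/- arXiv:2501.00583 — 6 statements merged into one kernel-verified Lean document; each statement's English description precedes it below -/
import Mathlib

section
/- Let n ≥ 1, let a : S_n × S_n × ℝⁿ → [0,1] be a comparison array (measurable in its last argument, antisymmetric, and equivariant), let f be any probability mass function on S_n (possibly non-uniform), let ε be an exchangeable random vector in ℝⁿ, and let σ be a random permutation with distribution f, independent of ε. Define the population p-value p^Pop(σ) = Σ_{π ∈ S_n} f(π)·a(π∘σ⁻¹, Id, ε). Then for every α ∈ [0,1], P(p^Pop(σ) ≤ α) ≤ 2α, where the probability is over both ε and σ. -/
open MeasureTheory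
open scoped Classical ENNReal

/-!
Sort the outcomes by the value `τ` of `σ`. By equivariance, `p^Pop(τ) ≤ α` says that
`ε ∘ τ` lies in the sublevel set `{e | ∑ κ, f κ * a κ τ e ≤ α}`; by independence and
exchangeability the event therefore has probability at most `∑ τ, f τ P(q_τ(ε) ≤ α)`, where
`q_τ(e) = ∑ κ, f κ * a κ τ e`. This is bounded pointwise in `e`: if `S` is the set of `τ` with
`q_τ(e) ≤ α` and `W = f(S)`, antisymmetry gives
`W² = 2 ∑_{τ, τ' ∈ S} f τ f τ' a τ' τ e ≤ 2 ∑_{τ ∈ S} f τ q_τ(e) ≤ 2αW`, so `W ≤ 2α`.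
-/

section Sublevel

variable {ι : Type*} [Fintype ι] (w : ι → ℝ) (b : ι → ι → ℝ) (α : ℝ)

theorem sq_sum_sublevel_le (hw : ∀ i, 0 ≤ w i) (hb0 : ∀ i j, 0 ≤ b i j)
    (hb : ∀ i j, b i j + b j i = 1) :
    (∑ j ∈ {j | ∑ i, w i * b i j ≤ α}, w j) ^ 2
      ≤ 2 * α * ∑ j ∈ {j | ∑ i, w i * b i j ≤ α}, w j := by
  set S : Finset ι := {j | ∑ i, w i * b i j ≤ α}
  set X := ∑ j ∈ S, w j * ∑ i ∈ S, w i * b i j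
  have hswap : ∑ j ∈ S, ∑ i ∈ S, w j * w i * b j i = X := by
    rw [Finset.sum_comm]
    refine Finset.sum_congr rfl fun j _ => ?_
    rw [Finset.mul_sum]
    exact Finset.sum_congr rfl fun i _ => by ring
  have hsq : (∑ j ∈ S, w j) ^ 2 = 2 * X := by
    calc (∑ j ∈ S, w j) ^ 2 = ∑ j ∈ S, ∑ i ∈ S, w j * w i * (b i j + b j i) := by
          simp only [hb, mul_one, sq, Finset.sum_mul_sum]
      _ = X + ∑ j ∈ S, ∑ i ∈ S, w j * w i * b j i := by
          simp only [X, mul_add, Finset.sum_add_distrib, Finset.mul_sum]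
          congr 1
          exact Finset.sum_congr rfl fun j _ => Finset.sum_congr rfl fun i _ => by ring
      _ = 2 * X := by rw [hswap]; ring
  have hX : X ≤ α * ∑ j ∈ S, w j := by
    rw [Finset.mul_sum]
    refine Finset.sum_le_sum fun j hj => ?_
    have hj : ∑ i, w i * b i j ≤ α := (Finset.mem_filter.1 hj).2
    calc w j * ∑ i ∈ S, w i * b i j ≤ w j * ∑ i, w i * b i j :=
          mul_le_mul_of_nonneg_left
            (Finset.sum_le_univ_sum_of_nonneg fun i => mul_nonneg (hw i) (hb0 i j)) (hw j)
      _ ≤ w j * α := mul_le_mul_of_nonneg_left hj (hw j)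
      _ = α * w j := mul_comm _ _
  rw [hsq]
  linarith

theorem ofReal_sum_sublevel_le (hw : ∀ i, 0 ≤ w i) (hb0 : ∀ i j, 0 ≤ b i j)
    (hb : ∀ i j, b i j + b j i = 1) :
    ENNReal.ofReal (∑ j ∈ {j | ∑ i, w i * b i j ≤ α}, w j) ≤ ENNReal.ofReal (2 * α) := by
  have hsq := sq_sum_sublevel_le w b α hw hb0 hb
  set W := ∑ j ∈ {j | ∑ i, w i * b i j ≤ α}, w j
  rw [ENNReal.ofReal_le_ofReal_iff']
  rcases (Finset.sum_nonneg fun j _ => hw j).eq_or_lt with hW | hW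
  · exact Or.inr hW.ge
  · exact Or.inl (le_of_mul_le_mul_right (by nlinarith) hW)

end Sublevel

theorem sum_mul_measure_le_of_forall_sum_indicator_le {X ι : Type*} [MeasurableSpace X]
    [Fintype ι] (μ : Measure X) [IsProbabilityMeasure μ] {B : ι → Set X}
    (hB : ∀ i, MeasurableSet (B i)) (c : ι → ℝ≥0∞) {C : ℝ≥0∞}
    (h : ∀ x, ∑ i, (B i).indicator (fun _ => c i) x ≤ C) :
    ∑ i, c i * μ (B i) ≤ C := by
  calc ∑ i, c i * μ (B i) = ∫⁻ x, ∑ i, (B i).indicator (fun _ => c i) x ∂μ := by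
        rw [lintegral_finsetSum _ fun i _ => measurable_const.indicator (hB i)]
        simp only [lintegral_indicator_const (hB _)]
    _ ≤ ∫⁻ _, C ∂μ := lintegral_mono h
    _ = C := by simp

theorem measure_comp_mem_eq_map {ι β Ω : Type*} [MeasurableSpace β] [MeasurableSpace Ω]
    (P : Measure Ω) {ε : Ω → ι → β} (hε : Measurable ε) {τ : ι → ι}
    (hexch : Measure.map (fun ω => fun i => ε ω (τ i)) P = Measure.map ε P)
    {s : Set (ι → β)} (hs : MeasurableSet s) :
    P {ω | (fun i => ε ω (τ i)) ∈ s} = Measure.map ε P s := by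
  rw [← hexch, Measure.map_apply (measurable_pi_lambda _ fun i => hε.eval) hs]
  rfl

theorem sum_mul_comparison_mul_inv_eq {ι : Type*} [Fintype ι] [DecidableEq ι]
    (a : Equiv.Perm ι → Equiv.Perm ι → (ι → ℝ) → ℝ)
    (haequi : ∀ (π₁ π₂ ρ : Equiv.Perm ι) (e : ι → ℝ),
      a π₁ π₂ (fun i => e (ρ i)) = a (π₁ * ρ⁻¹) (π₂ * ρ⁻¹) e)
    (f : Equiv.Perm ι → ℝ) (τ : Equiv.Perm ι) (e : ι → ℝ) :
    ∑ π, f π * a (π * τ⁻¹) 1 e = ∑ π, f π * a π τ (fun i => e (τ i)) := by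
  simp [haequi]

theorem population_pvalue_validity_general
    {n : ℕ}
    (a : Equiv.Perm (Fin n) → Equiv.Perm (Fin n) → (Fin n → ℝ) → ℝ)
    (ha01 : ∀ τ σ e, a τ σ e ∈ Set.Icc (0 : ℝ) 1)
    (hameas : ∀ τ σ, Measurable (a τ σ))
    (hasym : ∀ τ σ e, a τ σ e + a σ τ e = 1)
    (haequi : ∀ (π₁ π₂ ρ : Equiv.Perm (Fin n)) (e : Fin n → ℝ),
      a π₁ π₂ (fun i => e (ρ i)) = a (π₁ * ρ⁻¹) (π₂ * ρ⁻¹) e)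
    (f : Equiv.Perm (Fin n) → ℝ) (hf0 : ∀ π, 0 ≤ f π)
    {Ω : Type*} [MeasurableSpace Ω] (P : Measure Ω) [IsProbabilityMeasure P]
    (ε : Ω → Fin n → ℝ) (hε : Measurable ε)
    (hexch : ∀ π : Equiv.Perm (Fin n),
      Measure.map (fun ω => fun i => ε ω (π i)) P = Measure.map ε P)
    (σ : Ω → Equiv.Perm (Fin n))
    -- `σ` has distribution `f` and is independent of `ε`:
    (hdist : ∀ s : Set (Fin n → ℝ), MeasurableSet s → ∀ τ : Equiv.Perm (Fin n),
      P {ω | ε ω ∈ s ∧ σ ω = τ} = P {ω | ε ω ∈ s} * ENNReal.ofReal (f τ))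
    (α : ℝ) :
    P {ω | ∑ π : Equiv.Perm (Fin n), f π * a (π * (σ ω)⁻¹) 1 (ε ω) ≤ α}
      ≤ ENNReal.ofReal (2 * α) := by
  set B : Equiv.Perm (Fin n) → Set (Fin n → ℝ) := fun τ => {e | ∑ κ, f κ * a κ τ e ≤ α}
  have hB : ∀ τ, MeasurableSet (B τ) := fun τ =>
    measurableSet_le (Finset.measurable_sum _ fun κ _ => (hameas κ τ).const_mul _)
      measurable_const
  have hpermB : ∀ τ, MeasurableSet ((fun (e : Fin n → ℝ) i => e (τ i)) ⁻¹' B τ) := fun τ =>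
    measurable_pi_lambda _ (fun i => measurable_pi_apply (τ i)) (hB τ)
  have hsub : {ω | ∑ π, f π * a (π * (σ ω)⁻¹) 1 (ε ω) ≤ α}
      ⊆ ⋃ τ, {ω | ε ω ∈ (fun (e : Fin n → ℝ) i => e (τ i)) ⁻¹' B τ ∧ σ ω = τ} := fun ω hω =>
    Set.mem_iUnion.2 ⟨σ ω, by
      simpa [B, sum_mul_comparison_mul_inv_eq a haequi] using hω, rfl⟩
  have hpointwise : ∀ e, ∑ τ, (B τ).indicator (fun _ => ENNReal.ofReal (f τ)) e
      ≤ ENNReal.ofReal (2 * α) := fun e => by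
    refine le_of_eq_of_le ?_
      (ofReal_sum_sublevel_le f (a · · e) α hf0 (fun i j => (ha01 i j e).1) (hasym · · e))
    rw [ENNReal.ofReal_sum_of_nonneg fun τ _ => hf0 τ, Finset.sum_filter]
    simp [B, Set.indicator_apply]
  have := Measure.isProbabilityMeasure_map (μ := P) hε.aemeasurable
  calc _ ≤ ∑ τ, P {ω | ε ω ∈ (fun (e : Fin n → ℝ) i => e (τ i)) ⁻¹' B τ ∧ σ ω = τ} :=
        (measure_mono hsub).trans (measure_iUnion_fintype_le _ _)
    _ = ∑ τ, ENNReal.ofReal (f τ) * Measure.map ε P (B τ) := by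
        refine Finset.sum_congr rfl fun τ _ => ?_
        rw [hdist _ (hpermB τ) τ, mul_comm]
        exact congrArg _ (measure_comp_mem_eq_map P hε (hexch τ) (hB τ))
    _ ≤ ENNReal.ofReal (2 * α) :=
        sum_mul_measure_le_of_forall_sum_indicator_le _ hB _ hpointwise

/-- **Population p-value validity (possibly non-uniform `f`).**
For a comparison array `a` (values in `[0,1]`, measurable in its last argument,
antisymmetric, equivariant), a pmf `f` on `S_n`, an exchangeable random vector `ε`,
and a random permutation `σ ~ f` independent of `ε`, the population p-value
`p^Pop(σ) = Σ_π f(π)·a(π∘σ⁻¹, Id, ε)` satisfies `P(p^Pop(σ) ≤ α) ≤ 2α`. -/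
theorem population_pvalue_validity
    {n : ℕ} (hn : 1 ≤ n)
    (a : Equiv.Perm (Fin n) → Equiv.Perm (Fin n) → (Fin n → ℝ) → ℝ)
    (ha01 : ∀ τ σ e, a τ σ e ∈ Set.Icc (0 : ℝ) 1)
    (hameas : ∀ τ σ, Measurable (a τ σ))
    (hasym : ∀ τ σ e, a τ σ e + a σ τ e = 1)
    (haequi : ∀ (π₁ π₂ ρ : Equiv.Perm (Fin n)) (e : Fin n → ℝ),
      a π₁ π₂ (fun i => e (ρ i)) = a (π₁ * ρ⁻¹) (π₂ * ρ⁻¹) e)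
    (f : Equiv.Perm (Fin n) → ℝ) (hf0 : ∀ π, 0 ≤ f π)
    (hf1 : ∑ π : Equiv.Perm (Fin n), f π = 1)
    {Ω : Type*} [MeasurableSpace Ω] (P : Measure Ω) [IsProbabilityMeasure P]
    (ε : Ω → Fin n → ℝ) (hε : Measurable ε)
    (hexch : ∀ π : Equiv.Perm (Fin n),
      Measure.map (fun ω => fun i => ε ω (π i)) P = Measure.map ε P)
    (σ : Ω → Equiv.Perm (Fin n))
    (hσmeas : ∀ τ : Equiv.Perm (Fin n), MeasurableSet {ω | σ ω = τ})
    -- `σ` has distribution `f` and is independent of `ε`: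
    (hdist : ∀ s : Set (Fin n → ℝ), MeasurableSet s → ∀ τ : Equiv.Perm (Fin n),
      P {ω | ε ω ∈ s ∧ σ ω = τ} = P {ω | ε ω ∈ s} * ENNReal.ofReal (f τ))
    (α : ℝ) (hα : α ∈ Set.Icc (0 : ℝ) 1) :
    P {ω | ∑ π : Equiv.Perm (Fin n), f π * a (π * (σ ω)⁻¹) 1 (ε ω) ≤ α}
      ≤ ENNReal.ofReal (2 * α) :=
  population_pvalue_validity_general a ha01 hameas hasym haequi f hf0 P ε hε hexch σ hdist α
end

section
/- Let n ≥ 1, let a : S_n × S_n × ℝⁿ → [0,1] be a comparison array (measurable in its last argument, antisymmetric, and equivariant), let f be any probability mass function on S_n (possibly non-uniform), let ε be an exchangeable random vector in ℝⁿ, and let σ, π₁, …, π_B be i.i.d. random permutations with distribution f, independent of ε. Define the Monte-Carlo p-value p^MC(σ) = (1 + Σ_{b=1}^B a(π_b∘σ⁻¹, Id, ε)) / (1 + B). Then for every α ∈ [0,1], P(p^MC(σ) ≤ α) ≤ 2α, where the probability is over ε, σ, and π₁, …, π_B. -/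
open MeasureTheory
open scoped Classical ENNReal

/-- Score of item `j` against the others. -/
private def Sc {G : Type*} {m : ℕ} (A : G → G → ℝ) (h : Fin (m+1) → G) (j : Fin (m+1)) : ℝ :=
  ∑ b ∈ Finset.univ.erase j, A (h b) (h j)

private lemma count_bound {G : Type*} {m : ℕ} (A : G → G → ℝ)
    (h0 : ∀ τ σ, 0 ≤ A τ σ) (hasym : ∀ τ σ, A τ σ + A σ τ = 1)
    (h : Fin (m+1) → G) (c : ℝ) :
    ((Finset.univ.filter (fun j => Sc A h j ≤ c)).card : ℝ) ≤ max 0 (2*c+1) := by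
  classical
  set T := Finset.univ.filter (fun j => Sc A h j ≤ c) with hT
  rcases Nat.eq_zero_or_pos T.card with h0' | hpos
  · rw [h0']; simpa using le_max_left (0:ℝ) (2*c+1)
  · have hdiag : ∀ j, A (h j) (h j) = 1/2 := fun j => by
      have := hasym (h j) (h j); linarith
    set D := ∑ j ∈ T, ∑ b ∈ T.erase j, A (h b) (h j) with hD
    have hDfull : D = (∑ j ∈ T, ∑ b ∈ T, A (h b) (h j)) - T.card * (1/2) := by
      rw [hD, Finset.sum_congr rfl (fun j hj => Finset.sum_erase_eq_sub hj),
        Finset.sum_sub_distrib]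
      congr 1
      simp [hdiag, Finset.sum_const, mul_comm]
    have hfull2 : (∑ j ∈ T, ∑ b ∈ T, A (h b) (h j)) + (∑ j ∈ T, ∑ b ∈ T, A (h b) (h j))
        = (T.card : ℝ) * T.card := by
      have hsc : (∑ j ∈ T, ∑ b ∈ T, A (h b) (h j)) = ∑ j ∈ T, ∑ b ∈ T, A (h j) (h b) :=
        Finset.sum_comm
      nth_rewrite 1 [hsc]
      rw [← Finset.sum_add_distrib]
      rw [Finset.sum_congr rfl (fun j _ => (Finset.sum_add_distrib).symm)]
      have : ∀ j ∈ T, ∑ b ∈ T, (A (h j) (h b) + A (h b) (h j)) = (T.card : ℝ) := by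
        intro j _
        rw [Finset.sum_congr rfl (fun b _ => hasym (h j) (h b))]
        simp
      rw [Finset.sum_congr rfl this]
      simp [mul_comm]
    have hDle : D ≤ T.card * c := by
      rw [hD]
      calc ∑ j ∈ T, ∑ b ∈ T.erase j, A (h b) (h j)
          ≤ ∑ j ∈ T, c := by
            apply Finset.sum_le_sum
            intro j hj
            have h1 : ∑ b ∈ T.erase j, A (h b) (h j) ≤ Sc A h j := by
              apply Finset.sum_le_sum_of_subset_of_nonneg
              · exact Finset.erase_subset_erase _ (Finset.subset_univ T)
              · intro b _ _; exact h0 _ _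
            have h2 : Sc A h j ≤ c := (Finset.mem_filter.mp hj).2
            linarith
        _ = T.card * c := by simp [mul_comm]
    have htc : (1:ℝ) ≤ T.card := by exact_mod_cast hpos
    have hmain : (T.card : ℝ) ≤ 2*c+1 := by nlinarith
    exact hmain.trans (le_max_right _ _)

private lemma discrete_bound {G : Type*} [Fintype G] {m : ℕ} (A : G → G → ℝ)
    (h0 : ∀ τ σ, 0 ≤ A τ σ) (hasym : ∀ τ σ, A τ σ + A σ τ = 1)
    (f : G → ℝ) (hf0 : ∀ π, 0 ≤ f π) (hf1 : ∑ π : G, f π = 1) (c : ℝ) :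
    ∑ τ : G, ∑ g : Fin m → G, (f τ * ∏ b : Fin m, f (g b)) *
      (if (∑ b : Fin m, A (g b) τ) ≤ c then (1:ℝ) else 0)
      ≤ max 0 (2*c+1) / (m+1) := by
  classical
  set F : (Fin (m+1) → G) → ℝ :=
    fun h => (∏ i, f (h i)) * (if Sc A h 0 ≤ c then (1:ℝ) else 0) with hF
  have herase : ∀ (φ : Fin (m+1) → ℝ),
      ∑ b ∈ Finset.univ.erase 0, φ b = ∑ b : Fin m, φ b.succ := by
    intro φ
    rw [Finset.sum_erase_eq_sub (Finset.mem_univ 0), Fin.sum_univ_succ]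
    ring
  -- Step A : reindex the LHS as a sum over `Fin (m+1) → G`.
  have stepA : ∑ τ : G, ∑ g : Fin m → G, (f τ * ∏ b : Fin m, f (g b)) *
      (if (∑ b : Fin m, A (g b) τ) ≤ c then (1:ℝ) else 0) = ∑ h : Fin (m+1) → G, F h := by
    rw [← Fintype.sum_prod_type']
    apply Fintype.sum_equiv (Fin.consEquiv (fun _ => G))
    rintro ⟨τ, g⟩
    have h1 : ∏ i, f (Fin.cons (α := fun _ => G) τ g i) = f τ * ∏ b : Fin m, f (g b) := by
      rw [Fin.prod_univ_succ]; simp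
    have h2 : Sc A (Fin.cons (α := fun _ => G) τ g) 0 = ∑ b : Fin m, A (g b) τ := by
      rw [Sc, herase]; simp
    show _ = F (Fin.cons (α := fun _ => G) τ g)
    simp only [hF, h1, h2]
  -- Step B : swap coordinate 0 with coordinate j.
  have stepB : ∀ j : Fin (m+1),
      ∑ h : Fin (m+1) → G, F h
      = ∑ h : Fin (m+1) → G, (∏ i, f (h i)) * (if Sc A h j ≤ c then (1:ℝ) else 0) := by
    intro j
    have hbij : Function.Bijective (fun h : Fin (m+1) → G => h ∘ Equiv.swap 0 j) := by
      have : (fun h : Fin (m+1) → G => h ∘ Equiv.swap 0 j)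
          = (Equiv.arrowCongr (Equiv.swap 0 j) (Equiv.refl G)) := by
        funext h; simp [Equiv.arrowCongr, Function.comp]
      rw [this]
      exact (Equiv.arrowCongr (Equiv.swap 0 j) (Equiv.refl G)).bijective
    refine (Fintype.sum_bijective _ hbij _ _ ?_).symm
    intro h
    have hprod : ∏ i, f ((h ∘ Equiv.swap 0 j) i) = ∏ i, f (h i) :=
      Equiv.prod_comp (Equiv.swap 0 j) (fun i => f (h i))
    have hSc : Sc A (h ∘ Equiv.swap 0 j) 0 = Sc A h j := by
      rw [Sc, Sc]
      have h00 : (h ∘ Equiv.swap 0 j) 0 = h j := by simp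
      refine Finset.sum_equiv (Equiv.swap 0 j) ?_ ?_
      · intro b
        simp only [Finset.mem_erase, Finset.mem_univ, and_true]
        constructor
        · intro hb hcon
          exact hb ((Equiv.swap 0 j).injective (hcon.trans (Equiv.swap_apply_left 0 j).symm))
        · intro hb hcon
          subst hcon
          exact hb (Equiv.swap_apply_left 0 j)
      · intro b _
        simp
    rw [hF]
    simp only [hprod, hSc]
  -- Step C : average over j and apply the counting bound.
  rw [stepA]
  have hW0 : ∀ h : Fin (m+1) → G, (0:ℝ) ≤ ∏ i, f (h i) :=
    fun h => Finset.prod_nonneg (fun i _ => hf0 _)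
  have hWsum : ∑ h : Fin (m+1) → G, ∏ i, f (h i) = 1 := by
    have := Finset.prod_univ_sum (fun _ : Fin (m+1) => (Finset.univ : Finset G))
      (fun _ x => f x)
    rw [Fintype.piFinset_univ] at this
    rw [← this]
    simp [hf1]
  have hkey : ((m:ℝ)+1) * (∑ h : Fin (m+1) → G, F h) ≤ max 0 (2*c+1) := by
    have h1 : ((m:ℝ)+1) * (∑ h : Fin (m+1) → G, F h)
        = ∑ j : Fin (m+1), ∑ h : Fin (m+1) → G,
            (∏ i, f (h i)) * (if Sc A h j ≤ c then (1:ℝ) else 0) := by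
      rw [Finset.sum_congr rfl (fun j _ => (stepB j).symm)]
      simp [Finset.sum_const, mul_comm, Finset.card_univ]
    rw [h1, Finset.sum_comm]
    calc ∑ h : Fin (m+1) → G, ∑ j : Fin (m+1),
            (∏ i, f (h i)) * (if Sc A h j ≤ c then (1:ℝ) else 0)
        = ∑ h : Fin (m+1) → G, (∏ i, f (h i)) *
            ((Finset.univ.filter (fun j => Sc A h j ≤ c)).card : ℝ) := by
          apply Finset.sum_congr rfl
          intro h _
          rw [← Finset.mul_sum, Finset.sum_boole]
      _ ≤ ∑ h : Fin (m+1) → G, (∏ i, f (h i)) * max 0 (2*c+1) := by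
          apply Finset.sum_le_sum
          intro h _
          exact mul_le_mul_of_nonneg_left (count_bound A h0 hasym h c) (hW0 h)
      _ = max 0 (2*c+1) := by rw [← Finset.sum_mul, hWsum, one_mul]
  have hmpos : (0:ℝ) < (m:ℝ)+1 := by positivity
  rw [le_div_iff₀ hmpos]
  linarith [hkey]

/-- **Monte-Carlo p-value validity (possibly non-uniform `f`).**
For a comparison array `a`, a pmf `f` on `S_n`, an exchangeable random vector `ε`,
and i.i.d. random permutations `σ, π₁, …, π_B ~ f` independent of `ε`, the
Monte-Carlo p-value `p^MC(σ) = (1 + Σ_b a(π_b∘σ⁻¹, Id, ε))/(1+B)` satisfies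
`P(p^MC(σ) ≤ α) ≤ 2α`. -/
theorem monteCarlo_pvalue_validity
    {n B : ℕ} (hn : 1 ≤ n)
    (a : Equiv.Perm (Fin n) → Equiv.Perm (Fin n) → (Fin n → ℝ) → ℝ)
    (ha01 : ∀ τ σ e, a τ σ e ∈ Set.Icc (0 : ℝ) 1)
    (hameas : ∀ τ σ, Measurable (a τ σ))
    (hasym : ∀ τ σ e, a τ σ e + a σ τ e = 1)
    (haequi : ∀ (π₁ π₂ ρ : Equiv.Perm (Fin n)) (e : Fin n → ℝ),
      a π₁ π₂ (fun i => e (ρ i)) = a (π₁ * ρ⁻¹) (π₂ * ρ⁻¹) e)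
    (f : Equiv.Perm (Fin n) → ℝ) (hf0 : ∀ π, 0 ≤ f π)
    (hf1 : ∑ π : Equiv.Perm (Fin n), f π = 1)
    {Ω : Type*} [MeasurableSpace Ω] (P : Measure Ω) [IsProbabilityMeasure P]
    (ε : Ω → Fin n → ℝ) (hε : Measurable ε)
    (hexch : ∀ π : Equiv.Perm (Fin n),
      Measure.map (fun ω => fun i => ε ω (π i)) P = Measure.map ε P)
    (σ : Ω → Equiv.Perm (Fin n)) (perms : Ω → Fin B → Equiv.Perm (Fin n))
    (hσmeas : ∀ τ : Equiv.Perm (Fin n), MeasurableSet {ω | σ ω = τ})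
    (hpermsMeas : ∀ g : Fin B → Equiv.Perm (Fin n), MeasurableSet {ω | perms ω = g})
    -- `σ, π₁, …, π_B` are i.i.d. with common pmf `f`, independent of `ε`:
    (hiid : ∀ s : Set (Fin n → ℝ), MeasurableSet s →
      ∀ (τ : Equiv.Perm (Fin n)) (g : Fin B → Equiv.Perm (Fin n)),
      P {ω | ε ω ∈ s ∧ σ ω = τ ∧ perms ω = g}
        = P {ω | ε ω ∈ s} * ENNReal.ofReal (f τ)
            * ∏ b : Fin B, ENNReal.ofReal (f (g b)))
    (α : ℝ) (hα : α ∈ Set.Icc (0 : ℝ) 1) :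
    P {ω |
        (1 + ∑ b : Fin B, a (perms ω b * (σ ω)⁻¹) 1 (ε ω)) / (1 + B) ≤ α}
      ≤ ENNReal.ofReal (2 * α) := by
  classical
  obtain ⟨hα0, hα1⟩ := hα
  set c : ℝ := α * (1 + B) - 1 with hcdef
  have hBpos : (0:ℝ) < 1 + B := by positivity
  -- measurable target sets
  have hmeas'' : ∀ (τ : Equiv.Perm (Fin n)) (g : Fin B → Equiv.Perm (Fin n)),
      MeasurableSet {e : Fin n → ℝ | ∑ b : Fin B, a (g b) τ e ≤ c} :=
    fun τ g => measurableSet_le (Finset.measurable_sum _ fun b _ => hameas _ _)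
      measurable_const
  have hmeas' : ∀ (τ : Equiv.Perm (Fin n)) (g : Fin B → Equiv.Perm (Fin n)),
      MeasurableSet {e : Fin n → ℝ | ∑ b : Fin B, a (g b * τ⁻¹) 1 e ≤ c} :=
    fun τ g => measurableSet_le (Finset.measurable_sum _ fun b _ => hameas _ _)
      measurable_const
  -- rewrite the event
  have hev : {ω | (1 + ∑ b : Fin B, a (perms ω b * (σ ω)⁻¹) 1 (ε ω)) / (1 + B) ≤ α}
      = {ω | ∑ b : Fin B, a (perms ω b * (σ ω)⁻¹) 1 (ε ω) ≤ c} := by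
    ext ω
    simp only [Set.mem_setOf_eq, hcdef]
    rw [div_le_iff₀ hBpos]
    constructor <;> intro <;> linarith
  rw [hev]
  -- cover by a finite union over the values of (σ, perms)
  have hsub : {ω | ∑ b : Fin B, a (perms ω b * (σ ω)⁻¹) 1 (ε ω) ≤ c}
      ⊆ ⋃ τ : Equiv.Perm (Fin n), ⋃ g : Fin B → Equiv.Perm (Fin n),
          {ω | ε ω ∈ {e | ∑ b : Fin B, a (g b * τ⁻¹) 1 e ≤ c} ∧ σ ω = τ ∧ perms ω = g} := by
    intro ω hω
    exact Set.mem_iUnion.2 ⟨σ ω, Set.mem_iUnion.2 ⟨perms ω, ⟨hω, rfl, rfl⟩⟩⟩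
  refine le_trans (measure_mono hsub) ?_
  have step1 : P (⋃ τ : Equiv.Perm (Fin n), ⋃ g : Fin B → Equiv.Perm (Fin n),
        {ω | ε ω ∈ {e | ∑ b : Fin B, a (g b * τ⁻¹) 1 e ≤ c} ∧ σ ω = τ ∧ perms ω = g})
      ≤ ∑ τ : Equiv.Perm (Fin n), ∑ g : Fin B → Equiv.Perm (Fin n),
          P {ω | ε ω ∈ {e | ∑ b : Fin B, a (g b * τ⁻¹) 1 e ≤ c} ∧ σ ω = τ ∧ perms ω = g} := by
    refine le_trans (measure_iUnion_le _) ?_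
    rw [tsum_fintype]
    refine Finset.sum_le_sum fun τ _ => ?_
    refine le_trans (measure_iUnion_le _) ?_
    rw [tsum_fintype]
  refine le_trans step1 ?_
  -- use independence to factorize
  have step2 : ∀ (τ : Equiv.Perm (Fin n)) (g : Fin B → Equiv.Perm (Fin n)),
      P {ω | ε ω ∈ {e | ∑ b : Fin B, a (g b * τ⁻¹) 1 e ≤ c} ∧ σ ω = τ ∧ perms ω = g}
      = P {ω | ε ω ∈ {e | ∑ b : Fin B, a (g b * τ⁻¹) 1 e ≤ c}} * ENNReal.ofReal (f τ)
          * ∏ b : Fin B, ENNReal.ofReal (f (g b)) :=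
    fun τ g => hiid _ (hmeas' τ g) τ g
  -- exchangeability : transform the set
  set μ := Measure.map ε P with hμ
  have hμprob : IsProbabilityMeasure μ := Measure.isProbabilityMeasure_map hε.aemeasurable
  have step3 : ∀ (τ : Equiv.Perm (Fin n)) (g : Fin B → Equiv.Perm (Fin n)),
      P {ω | ε ω ∈ {e | ∑ b : Fin B, a (g b * τ⁻¹) 1 e ≤ c}}
      = μ {e | ∑ b : Fin B, a (g b) τ e ≤ c} := by
    intro τ g
    have hm : Measurable (fun ω => fun i => ε ω (τ⁻¹ i)) :=
      measurable_pi_lambda _ fun i => (measurable_pi_apply _).comp hε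
    have h2 : P ((fun ω => fun i => ε ω (τ⁻¹ i)) ⁻¹' {e | ∑ b : Fin B, a (g b * τ⁻¹) 1 e ≤ c})
        = P (ε ⁻¹' {e | ∑ b : Fin B, a (g b * τ⁻¹) 1 e ≤ c}) := by
      rw [← Measure.map_apply hm (hmeas' τ g), ← Measure.map_apply hε (hmeas' τ g), hexch τ⁻¹]
    have h3 : (fun ω => fun i => ε ω (τ⁻¹ i)) ⁻¹' {e | ∑ b : Fin B, a (g b * τ⁻¹) 1 e ≤ c}
        = {ω | ∑ b : Fin B, a (g b) τ (ε ω) ≤ c} := by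
      ext ω
      simp only [Set.mem_preimage, Set.mem_setOf_eq]
      have heq : ∀ b : Fin B, a (g b * τ⁻¹) 1 (fun i => ε ω (τ⁻¹ i)) = a (g b) τ (ε ω) := by
        intro b
        rw [haequi (g b * τ⁻¹) 1 τ⁻¹ (ε ω)]
        simp
      rw [Finset.sum_congr rfl fun b _ => heq b]
    have h4 : ε ⁻¹' {e | ∑ b : Fin B, a (g b * τ⁻¹) 1 e ≤ c}
        = {ω | ε ω ∈ {e | ∑ b : Fin B, a (g b * τ⁻¹) 1 e ≤ c}} := rfl
    rw [← h4, ← h2, h3, hμ, Measure.map_apply hε (hmeas'' τ g)]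
    rfl
  -- the ENNReal weight
  set w : Equiv.Perm (Fin n) → (Fin B → Equiv.Perm (Fin n)) → ℝ≥0∞ :=
    fun τ g => ENNReal.ofReal (f τ) * ∏ b : Fin B, ENNReal.ofReal (f (g b)) with hw
  have step4 : ∑ τ : Equiv.Perm (Fin n), ∑ g : Fin B → Equiv.Perm (Fin n),
      P {ω | ε ω ∈ {e | ∑ b : Fin B, a (g b * τ⁻¹) 1 e ≤ c} ∧ σ ω = τ ∧ perms ω = g}
      = ∑ τ : Equiv.Perm (Fin n), ∑ g : Fin B → Equiv.Perm (Fin n),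
        ∫⁻ e, ({e : Fin n → ℝ | ∑ b : Fin B, a (g b) τ e ≤ c}).indicator
          (fun _ => w τ g) e ∂μ := by
    refine Finset.sum_congr rfl fun τ _ => Finset.sum_congr rfl fun g _ => ?_
    rw [step2 τ g, step3 τ g, lintegral_indicator_const (hmeas'' τ g), hw]
    ring
  rw [step4]
  -- swap the finite sums with the integral
  have hmeasInd : ∀ (τ : Equiv.Perm (Fin n)) (g : Fin B → Equiv.Perm (Fin n)),
      Measurable (({e : Fin n → ℝ | ∑ b : Fin B, a (g b) τ e ≤ c}).indicator
        (fun _ => w τ g)) :=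
    fun τ g => measurable_const.indicator (hmeas'' τ g)
  have step5 : ∑ τ : Equiv.Perm (Fin n), ∑ g : Fin B → Equiv.Perm (Fin n),
      ∫⁻ e, ({e : Fin n → ℝ | ∑ b : Fin B, a (g b) τ e ≤ c}).indicator (fun _ => w τ g) e ∂μ
      = ∫⁻ e, ∑ τ : Equiv.Perm (Fin n), ∑ g : Fin B → Equiv.Perm (Fin n),
          ({e : Fin n → ℝ | ∑ b : Fin B, a (g b) τ e ≤ c}).indicator (fun _ => w τ g) e ∂μ := by
    rw [lintegral_finset_sum _ (fun τ _ => Finset.measurable_sum _ fun g _ => hmeasInd τ g)]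
    refine Finset.sum_congr rfl fun τ _ => ?_
    rw [lintegral_finset_sum _ (fun g _ => hmeasInd τ g)]
  rw [step5]
  -- pointwise bound via the discrete lemma
  have hpt : ∀ e : Fin n → ℝ,
      ∑ τ : Equiv.Perm (Fin n), ∑ g : Fin B → Equiv.Perm (Fin n),
        ({e : Fin n → ℝ | ∑ b : Fin B, a (g b) τ e ≤ c}).indicator (fun _ => w τ g) e
      ≤ ENNReal.ofReal (2 * α) := by
    intro e
    have heq : ∀ (τ : Equiv.Perm (Fin n)) (g : Fin B → Equiv.Perm (Fin n)),
        ({e : Fin n → ℝ | ∑ b : Fin B, a (g b) τ e ≤ c}).indicator (fun _ => w τ g) e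
        = ENNReal.ofReal ((f τ * ∏ b : Fin B, f (g b)) *
            (if (∑ b : Fin B, a (g b) τ e) ≤ c then (1:ℝ) else 0)) := by
      intro τ g
      by_cases hc' : (∑ b : Fin B, a (g b) τ e) ≤ c
      · have hmem : e ∈ {e : Fin n → ℝ | ∑ b : Fin B, a (g b) τ e ≤ c} := hc'
        rw [Set.indicator_of_mem hmem, if_pos hc', mul_one, hw,
          ENNReal.ofReal_mul (hf0 τ), ENNReal.ofReal_prod_of_nonneg (fun b _ => hf0 _)]
      · have hmem : e ∉ {e : Fin n → ℝ | ∑ b : Fin B, a (g b) τ e ≤ c} := hc'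
        rw [Set.indicator_of_notMem hmem, if_neg hc', mul_zero, ENNReal.ofReal_zero]
    calc ∑ τ : Equiv.Perm (Fin n), ∑ g : Fin B → Equiv.Perm (Fin n),
          ({e : Fin n → ℝ | ∑ b : Fin B, a (g b) τ e ≤ c}).indicator (fun _ => w τ g) e
        = ENNReal.ofReal (∑ τ : Equiv.Perm (Fin n), ∑ g : Fin B → Equiv.Perm (Fin n),
            (f τ * ∏ b : Fin B, f (g b)) *
            (if (∑ b : Fin B, a (g b) τ e) ≤ c then (1:ℝ) else 0)) := by
          rw [ENNReal.ofReal_sum_of_nonneg]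
          · refine Finset.sum_congr rfl fun τ _ => ?_
            rw [ENNReal.ofReal_sum_of_nonneg]
            · exact Finset.sum_congr rfl fun g _ => (heq τ g)
            · intro g _
              have := hf0 τ
              have := Finset.prod_nonneg (fun b (_ : b ∈ Finset.univ) => hf0 (g b))
              positivity
          · intro τ _
            refine Finset.sum_nonneg fun g _ => ?_
            have := hf0 τ
            have := Finset.prod_nonneg (fun b (_ : b ∈ Finset.univ) => hf0 (g b))
            positivity
      _ ≤ ENNReal.ofReal (2 * α) := by
          refine ENNReal.ofReal_le_ofReal ?_
          refine le_trans (discrete_bound (fun τ' σ' => a τ' σ' e)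
            (fun τ' σ' => (ha01 τ' σ' e).1) (fun τ' σ' => hasym τ' σ' e) f hf0 hf1 c) ?_
          rw [div_le_iff₀ (by positivity : (0:ℝ) < (B:ℝ)+1)]
          refine max_le (by positivity) ?_
          simp only [hcdef]
          nlinarith
  refine le_trans (lintegral_mono hpt) ?_
  rw [lintegral_const]
  simp [measure_univ]
end

section
/- Let n ≥ 1, let a : S_n × S_n × ℝⁿ → [0,1] be a comparison array (measurable in its last argument, antisymmetric, and equivariant), let G be a subgroup of S_n, let f be the uniform probability mass function on G, let ε be an exchangeable random vector in ℝⁿ, and let σ be uniformly distributed on G, independent of ε. Define p^Pop(σ) = Σ_{π ∈ G} f(π)·a(π∘σ⁻¹, Id, ε) and p^Pop(Id) = Σ_{π ∈ G} f(π)·a(π, Id, ε). Then p^Pop(σ) has the same distribution as p^Pop(Id), and consequently for every α ∈ [0,1], P(p^Pop(Id) ≤ α) ≤ 2α, where this last probability is over ε alone. -/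
/-!
Since `σ ∈ G` almost surely and the uniform weights `f` are invariant under right
multiplication by `G`, reindexing the sum gives `p^Pop(σ) = p^Pop(Id)` almost surely.

For the bound, equivariance turns the statistic `∑ π, f π * a π τ (ε ∘ τ)` into `p^Pop(Id)`,
so by exchangeability the events `{∑ π, f π * a π τ ε ≤ α}`, `τ ∈ G`, all have the probability
of `{p^Pop(Id) ≤ α}`. By antisymmetry at most `2α|G|` of them hold at once: if `k` of them hold,
the comparisons among those `k` permutations alone already contribute `k²/2` to their total,
which is at most `k α |G|`. Averaging the count over `ε` gives `|G| P(p^Pop(Id) ≤ α) ≤ 2α|G|`.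
-/

open MeasureTheory Finset
open scoped Classical ENNReal BigOperators

theorem sum_sum_eq_card_sq_div_two {ι : Type*} (s : Finset ι) (M : ι → ι → ℝ)
    (hM : ∀ i ∈ s, ∀ j ∈ s, M i j + M j i = 1) :
    ∑ i ∈ s, ∑ j ∈ s, M i j = (#s : ℝ) ^ 2 / 2 := by
  have htotal : ∑ i ∈ s, ∑ j ∈ s, (M i j + M j i) = (#s : ℝ) ^ 2 := by
    simp +contextual [hM, sq]
  rw [sum_congr rfl fun i _ => sum_add_distrib, sum_add_distrib,
    sum_comm (f := fun j i => M i j)] at htotal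
  linarith

theorem card_filter_expect_le {ι : Type*} (s : Finset ι) (M : ι → ι → ℝ)
    (hM0 : ∀ i ∈ s, ∀ j ∈ s, 0 ≤ M i j) (hM : ∀ i ∈ s, ∀ j ∈ s, M i j + M j i = 1)
    {α : ℝ} (hα : 0 ≤ α) :
    (#{j ∈ s | 𝔼 i ∈ s, M i j ≤ α} : ℝ) ≤ 2 * α * #s := by
  set S := {j ∈ s | 𝔼 i ∈ s, M i j ≤ α}
  have hSs : S ⊆ s := filter_subset _ _
  have hlow : (#S : ℝ) ^ 2 / 2 ≤ ∑ j ∈ S, ∑ i ∈ s, M i j := by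
    rw [← sum_sum_eq_card_sq_div_two S (fun j i => M i j)
      fun j hj i hi => hM _ (hSs hi) _ (hSs hj)]
    exact sum_le_sum fun j hj => sum_le_sum_of_subset_of_nonneg hSs
      fun i hi _ => hM0 _ hi _ (hSs hj)
  have hup : ∑ j ∈ S, ∑ i ∈ s, M i j ≤ #S * (α * #s) := by
    rw [← nsmul_eq_mul, ← sum_const]
    refine sum_le_sum fun j hj => ?_
    rw [← card_mul_expect, mul_comm]
    exact mul_le_mul_of_nonneg_right (mem_filter.mp hj).2 (Nat.cast_nonneg _)
  rcases (Nat.cast_nonneg #S : (0:ℝ) ≤ _).eq_or_lt with h | h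
  · rw [← h]; positivity
  · nlinarith

theorem sum_measure_eq_lintegral_card_filter {ι Ω : Type*} [MeasurableSpace Ω] (μ : Measure Ω)
    (s : Finset ι) {E : ι → Set Ω} (hE : ∀ i ∈ s, MeasurableSet (E i)) :
    ∑ i ∈ s, μ (E i) = ∫⁻ ω, (#{i ∈ s | ω ∈ E i} : ℝ≥0∞) ∂μ := by
  rw [← sum_congr rfl fun i hi => lintegral_indicator_one (μ := μ) (hE i hi),
    ← lintegral_finsetSum' _ fun i hi => (measurable_one.indicator (hE i hi)).aemeasurable]
  simp only [Set.indicator_apply, Pi.one_apply, sum_boole]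

theorem measure_le_of_card_filter_mem_le {ι Ω : Type*} [MeasurableSpace Ω] {μ : Measure Ω}
    [IsProbabilityMeasure μ] {s : Finset ι} (hs : s.Nonempty) {E : ι → Set Ω}
    (hE : ∀ i ∈ s, MeasurableSet (E i)) {p : ℝ≥0∞} (hp : ∀ i ∈ s, μ (E i) = p) {c : ℝ}
    (hc : ∀ ω, (#{i ∈ s | ω ∈ E i} : ℝ) ≤ c * #s) :
    p ≤ ENNReal.ofReal c := by
  have hcount : ∀ ω, (#{i ∈ s | ω ∈ E i} : ℝ≥0∞) ≤ ENNReal.ofReal c * #s := fun ω => by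
    rw [← ENNReal.ofReal_natCast, ← ENNReal.ofReal_natCast #s,
      ← ENNReal.ofReal_mul' (Nat.cast_nonneg _)]
    exact ENNReal.ofReal_le_ofReal (hc ω)
  have hmul : #s * p ≤ ENNReal.ofReal c * #s := calc
    #s * p = ∑ i ∈ s, μ (E i) := by rw [sum_congr rfl hp, sum_const, nsmul_eq_mul]
    _ = ∫⁻ ω, (#{i ∈ s | ω ∈ E i} : ℝ≥0∞) ∂μ := sum_measure_eq_lintegral_card_filter μ s hE
    _ ≤ ∫⁻ _, ENNReal.ofReal c * #s ∂μ := lintegral_mono hcount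
    _ = ENNReal.ofReal c * #s := by simp
  rwa [mul_comm, ENNReal.mul_le_mul_iff_left (by simpa using hs.ne_empty) (by simp)] at hmul

theorem ae_mem_of_measure_eq_zero {α Ω : Type*} [Countable α] [MeasurableSpace Ω]
    {μ : Measure Ω} {X : Ω → α} {S : Set α} (h : ∀ a ∉ S, μ {ω | X ω = a} = 0) :
    ∀ᵐ ω ∂μ, X ω ∈ S := by
  have : ∀ a, ∀ᵐ ω ∂μ, X ω = a → a ∈ S := fun a => by
    by_cases ha : a ∈ S
    · exact .of_forall fun _ _ => ha
    · filter_upwards [measure_eq_zero_iff_ae_notMem.mp (h a ha)] with ω hω h' using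
        absurd h' hω
  filter_upwards [ae_all_iff.mpr this] with ω hω using hω _ rfl

section UniformOnSubgroup

variable {H : Type*} [Group H] {G : Subgroup H} {f : H → ℝ}

theorem uniform_mul_right (hf : ∀ π, f π = if π ∈ G then ((Nat.card G : ℝ))⁻¹ else 0)
    {τ : H} (hτ : τ ∈ G) (π : H) : f (π * τ) = f π := by
  simp only [hf, mul_mem_cancel_right hτ]

theorem sum_uniform_mul_comp_mul_inv [Fintype H]
    (hf : ∀ π, f π = if π ∈ G then ((Nat.card G : ℝ))⁻¹ else 0)
    {τ : H} (hτ : τ ∈ G) (g : H → ℝ) : ∑ π, f π * g (π * τ⁻¹) = ∑ π, f π * g π :=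
  (Fintype.sum_equiv (Equiv.mulRight τ) _ _ fun π => by
    simp [uniform_mul_right hf hτ]).symm

theorem sum_uniform_mul_eq_expect [Fintype H]
    (hf : ∀ π, f π = if π ∈ G then ((Nat.card G : ℝ))⁻¹ else 0) (g : H → ℝ) :
    ∑ π, f π * g π = 𝔼 π ∈ {π | π ∈ G}, g π := by
  rw [expect_eq_sum_div_card, sum_filter, sum_div]
  refine sum_congr rfl fun π _ => ?_
  rw [hf, Nat.card_eq_fintype_card, Fintype.card_subtype]
  split_ifs <;> simp [div_eq_inv_mul]

end UniformOnSubgroup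

theorem population_pvalue_subgroup_validity_general
    {n : ℕ}
    (a : Equiv.Perm (Fin n) → Equiv.Perm (Fin n) → (Fin n → ℝ) → ℝ)
    (ha01 : ∀ τ σ e, a τ σ e ∈ Set.Icc (0 : ℝ) 1)
    (hameas : ∀ τ σ, Measurable (a τ σ))
    (hasym : ∀ τ σ e, a τ σ e + a σ τ e = 1)
    (haequi : ∀ (π₁ π₂ ρ : Equiv.Perm (Fin n)) (e : Fin n → ℝ),
      a π₁ π₂ (fun i => e (ρ i)) = a (π₁ * ρ⁻¹) (π₂ * ρ⁻¹) e)
    (G : Subgroup (Equiv.Perm (Fin n)))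
    -- the uniform pmf on `G`:
    (f : Equiv.Perm (Fin n) → ℝ)
    (hf : ∀ π, f π = if π ∈ G then ((Nat.card G : ℝ))⁻¹ else 0)
    {Ω : Type*} [MeasurableSpace Ω] (P : Measure Ω) [IsProbabilityMeasure P]
    (ε : Ω → Fin n → ℝ) (hε : Measurable ε)
    (hexch : ∀ π : Equiv.Perm (Fin n),
      Measure.map (fun ω => fun i => ε ω (π i)) P = Measure.map ε P)
    (σ : Ω → Equiv.Perm (Fin n))
    -- `σ` is uniform on `G` and independent of `ε`:
    (hdist : ∀ s : Set (Fin n → ℝ), MeasurableSet s → ∀ τ : Equiv.Perm (Fin n),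
      P {ω | ε ω ∈ s ∧ σ ω = τ} = P {ω | ε ω ∈ s} * ENNReal.ofReal (f τ))
    (α : ℝ) (hα : α ∈ Set.Icc (0 : ℝ) 1) :
    Measure.map
        (fun ω => ∑ π : Equiv.Perm (Fin n), f π * a (π * (σ ω)⁻¹) 1 (ε ω)) P
      = Measure.map
        (fun ω => ∑ π : Equiv.Perm (Fin n), f π * a π 1 (ε ω)) P
    ∧ P {ω | ∑ π : Equiv.Perm (Fin n), f π * a π 1 (ε ω) ≤ α}
        ≤ ENNReal.ofReal (2 * α) := by
  set s : Finset (Equiv.Perm (Fin n)) := {π | π ∈ G}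
  have hreindex : ∀ τ ∈ G, ∀ e, ∑ π, f π * a (π * τ⁻¹) 1 e = ∑ π, f π * a π 1 e :=
    fun τ hτ e => sum_uniform_mul_comp_mul_inv hf hτ fun π => a π 1 e
  refine ⟨Measure.map_congr ?_, ?_⟩
  · have hσ : ∀ τ ∉ G, P {ω | σ ω = τ} = 0 := fun τ hτ => by
      simpa [hf, hτ] using hdist _ .univ τ
    filter_upwards [ae_mem_of_measure_eq_zero hσ] with ω hω using hreindex _ hω _
  · let A τ : Set (Fin n → ℝ) := {e | ∑ π, f π * a π τ e ≤ α}
    have hA : ∀ τ, MeasurableSet (A τ) := fun τ =>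
      measurableSet_le (measurable_sum _ fun π _ => (hameas π τ).const_mul _)
        measurable_const
    have hprob : ∀ τ ∈ s, P (ε ⁻¹' A τ) = P (ε ⁻¹' A 1) := fun τ hτ => by
      have hshift : ProbabilityTheory.IdentDistrib (fun ω i => ε ω (τ i)) ε P P :=
        ⟨(measurable_pi_lambda _ fun i => measurable_pi_apply (τ i) |>.comp hε).aemeasurable,
          hε.aemeasurable, hexch τ⟩
      rw [← hshift.measure_mem_eq (hA τ)]
      simp only [A, Set.preimage_ofPred_eq, haequi, mul_inv_cancel,
        hreindex τ (mem_filter.mp hτ).2]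
    have hcount : ∀ ω, (#{τ ∈ s | ω ∈ ε ⁻¹' A τ} : ℝ) ≤ 2 * α * #s := fun ω => by
      simp only [A, Set.preimage_ofPred_eq, Set.mem_ofPred_eq, sum_uniform_mul_eq_expect hf]
      exact card_filter_expect_le s (fun π τ => a π τ (ε ω)) (fun _ _ _ _ => (ha01 _ _ _).1)
        (fun _ _ _ _ => hasym _ _ _) hα.1
    exact measure_le_of_card_filter_mem_le ⟨1, by simp [s]⟩ (fun τ _ => hε (hA τ)) hprob hcount

/-- **Population p-value with uniform distribution on a subgroup.**
If `f` is the uniform pmf on a subgroup `G ≤ S_n` and `σ` is uniform on `G`,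
independent of the exchangeable vector `ε`, then `p^Pop(σ)` has the same
distribution as `p^Pop(Id)`, and consequently `P(p^Pop(Id) ≤ α) ≤ 2α`, a
probability over `ε` alone. -/
theorem population_pvalue_subgroup_validity
    {n : ℕ} (hn : 1 ≤ n)
    (a : Equiv.Perm (Fin n) → Equiv.Perm (Fin n) → (Fin n → ℝ) → ℝ)
    (ha01 : ∀ τ σ e, a τ σ e ∈ Set.Icc (0 : ℝ) 1)
    (hameas : ∀ τ σ, Measurable (a τ σ))
    (hasym : ∀ τ σ e, a τ σ e + a σ τ e = 1)
    (haequi : ∀ (π₁ π₂ ρ : Equiv.Perm (Fin n)) (e : Fin n → ℝ),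
      a π₁ π₂ (fun i => e (ρ i)) = a (π₁ * ρ⁻¹) (π₂ * ρ⁻¹) e)
    (G : Subgroup (Equiv.Perm (Fin n)))
    -- the uniform pmf on `G`:
    (f : Equiv.Perm (Fin n) → ℝ)
    (hf : ∀ π, f π = if π ∈ G then ((Nat.card G : ℝ))⁻¹ else 0)
    {Ω : Type*} [MeasurableSpace Ω] (P : Measure Ω) [IsProbabilityMeasure P]
    (ε : Ω → Fin n → ℝ) (hε : Measurable ε)
    (hexch : ∀ π : Equiv.Perm (Fin n),
      Measure.map (fun ω => fun i => ε ω (π i)) P = Measure.map ε P)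
    (σ : Ω → Equiv.Perm (Fin n))
    (hσmeas : ∀ τ : Equiv.Perm (Fin n), MeasurableSet {ω | σ ω = τ})
    -- `σ` is uniform on `G` and independent of `ε`:
    (hdist : ∀ s : Set (Fin n → ℝ), MeasurableSet s → ∀ τ : Equiv.Perm (Fin n),
      P {ω | ε ω ∈ s ∧ σ ω = τ} = P {ω | ε ω ∈ s} * ENNReal.ofReal (f τ))
    (α : ℝ) (hα : α ∈ Set.Icc (0 : ℝ) 1) :
    Measure.map
        (fun ω => ∑ π : Equiv.Perm (Fin n), f π * a (π * (σ ω)⁻¹) 1 (ε ω)) P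
      = Measure.map
        (fun ω => ∑ π : Equiv.Perm (Fin n), f π * a π 1 (ε ω)) P
    ∧ P {ω | ∑ π : Equiv.Perm (Fin n), f π * a π 1 (ε ω) ≤ α}
        ≤ ENNReal.ofReal (2 * α) :=
  population_pvalue_subgroup_validity_general a ha01 hameas hasym haequi G f hf P ε hε hexch σ hdist
    α hα
end

section
/- Let n ≥ 1, let a : S_n × S_n × ℝⁿ → [0,1] be a comparison array (measurable in its last argument, antisymmetric, and equivariant), let G be a subgroup of S_n, let ε be an exchangeable random vector in ℝⁿ, and let σ, π₁, …, π_B be i.i.d. uniform on G, independent of ε. Define the Monte-Carlo p-values p^MC(σ) = (1 + Σ_{b=1}^B a(π_b∘σ⁻¹, Id, ε)) / (1 + B) and p^MC(Id) = (1 + Σ_{b=1}^B a(π_b, Id, ε)) / (1 + B). Then p^MC(σ) has the same distribution as p^MC(Id), and consequently for every α ∈ [0,1], P(p^MC(Id) ≤ α) ≤ 2α, where this last probability is over ε and π₁, …, π_B. -/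
/-!
Conditioned on the finitely many values of `(σ, π)`, which are independent of `ε`, everything is a
finite sum. For `τ ∈ G` the substitution `π_b ↦ π_b τ⁻¹` preserves the uniform law on `G^B`, so
`p^MC(σ)` and `p^MC(Id)` have the same law.

For the bound it therefore suffices to consider `p^MC(σ)`. Exchangeability of `ε` and equivariance
of `a` turn `a(π_b σ⁻¹, Id, ε)` into `a(π_b, σ, ε)`. Since `a(h, h, ·) = 1/2`, the numerator of
`p^MC` is then the rank `1/2 + ∑_i a(h_i, h_0, ε)` of `h_0 = σ` among the `B + 1` i.i.d. draws
`h = (σ, π_1, …, π_B)`. The draws are exchangeable, so `(B + 1) P(p^MC ≤ α)` is the expected number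
of draws of rank at most `α (B + 1)`. By antisymmetry, `k` draws have total rank at least
`k/2 + k²/2`, so at most `2 α (B + 1)` of them can have rank at most `α (B + 1)`.
-/

open MeasureTheory Finset
open scoped Classical ENNReal

theorem two_mul_sum_sum_eq_card_mul_card {ι : Type*} {A : ι → ι → ℝ}
    (hA : ∀ i j, A i j + A j i = 1) (S : Finset ι) :
    2 * ∑ j ∈ S, ∑ i ∈ S, A i j = #S * #S := by
  have hswap : ∑ j ∈ S, ∑ i ∈ S, A i j = ∑ j ∈ S, ∑ i ∈ S, A j i := sum_comm
  have hpair : ∑ j ∈ S, ∑ i ∈ S, (A i j + A j i) = #S * #S := by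
    simp [hA]
  simp only [sum_add_distrib] at hpair
  linarith

theorem card_filter_half_add_sum_le {ι : Type*} [Fintype ι] {A : ι → ι → ℝ}
    (hA : ∀ i j, A i j + A j i = 1) (hA0 : ∀ i j, 0 ≤ A i j) (t : ℝ) :
    (#{j | 2⁻¹ + ∑ i, A i j ≤ t} : ℝ≥0∞) ≤ ENNReal.ofReal (2 * t) := by
  set S : Finset ι := {j | 2⁻¹ + ∑ i, A i j ≤ t}
  rcases (#S).eq_zero_or_pos with hS | hS
  · simp [hS]
  have hsum : #S * 2⁻¹ + ∑ j ∈ S, ∑ i ∈ S, A i j ≤ #S * t := calc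
    #S * 2⁻¹ + ∑ j ∈ S, ∑ i ∈ S, A i j ≤ ∑ j ∈ S, (2⁻¹ + ∑ i, A i j) := by
      rw [sum_add_distrib, sum_const, nsmul_eq_mul]
      gcongr with j
      · exact fun i _ _ => hA0 i j
      · exact subset_univ S
    _ ≤ ∑ _j ∈ S, t := sum_le_sum fun j hj => (mem_filter.mp hj).2
    _ = #S * t := by rw [sum_const, nsmul_eq_mul]
  have hS1 : (1 : ℝ) ≤ #S := by exact_mod_cast hS
  rw [← ENNReal.ofReal_natCast]
  apply ENNReal.ofReal_le_ofReal
  nlinarith [two_mul_sum_sum_eq_card_mul_card hA S]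

theorem sum_comp_perm_mul_prod {ι M R : Type*} [Fintype ι] [DecidableEq ι] [Fintype M]
    [CommSemiring R] (σ : Equiv.Perm ι) (Ψ : (ι → M) → R) (w : M → R) :
    ∑ h : ι → M, Ψ (h ∘ σ) * ∏ i, w (h i) = ∑ h : ι → M, Ψ h * ∏ i, w (h i) :=
  Fintype.sum_equiv (σ.symm.arrowCongr (Equiv.refl M)) _ _ fun h =>
    congrArg (Ψ (h ∘ σ) * ·) (Equiv.prod_comp σ fun i => w (h i)).symm

theorem sum_prod_eq_one {ι M : Type*} [Fintype ι] [DecidableEq ι] [Fintype M] {w : M → ℝ≥0∞}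
    (hw : ∑ x, w x = 1) : ∑ h : ι → M, ∏ i, w (h i) = 1 := by
  rw [← Fintype.prod_sum (fun _ => w)]
  simp [hw]

theorem sum_measure_le_of_forall_card_le {E ι : Type*} [MeasurableSpace E] [Fintype ι]
    (μ : Measure E) {s : ι → Set E} (hs : ∀ i, MeasurableSet (s i)) {N : ℝ≥0∞}
    (hN : ∀ x, (#{i | x ∈ s i} : ℝ≥0∞) ≤ N) : ∑ i, μ (s i) ≤ N * μ Set.univ := calc
  ∑ i, μ (s i) = ∫⁻ x, ∑ i, (s i).indicator 1 x ∂μ := by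
    rw [lintegral_finsetSum _ fun i _ => measurable_one.indicator (hs i)]
    simp only [lintegral_indicator_one (hs _)]
  _ ≤ ∫⁻ _, N ∂μ := lintegral_mono fun x => by
    simpa [Set.indicator_apply, sum_boole] using hN x
  _ = N * μ Set.univ := lintegral_const N

theorem card_mul_sum_measure_rank_le {ι M E : Type*} [Fintype ι] [DecidableEq ι] [Fintype M]
    [MeasurableSpace E] (μ : Measure E) [IsProbabilityMeasure μ] {w : M → ℝ≥0∞}
    (hw : ∑ x, w x = 1) {A : M → M → E → ℝ} (hA : ∀ x y e, A x y e + A y x e = 1)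
    (hA0 : ∀ x y e, 0 ≤ A x y e) (hAm : ∀ x y, Measurable (A x y)) (i₀ : ι) (c : ℝ) :
    Fintype.card ι * ∑ h : ι → M, μ {e | 2⁻¹ + ∑ i, A (h i) (h i₀) e ≤ c} * ∏ i, w (h i)
      ≤ ENNReal.ofReal (2 * c) := by
  set rank : (ι → M) → ι → ℝ≥0∞ := fun h j => μ {e | 2⁻¹ + ∑ i, A (h i) (h j) e ≤ c}
  have hsymm : ∀ j, ∑ h : ι → M, rank h i₀ * ∏ i, w (h i)
      = ∑ h : ι → M, rank h j * ∏ i, w (h i) := fun j => by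
    rw [← sum_comp_perm_mul_prod (Equiv.swap i₀ j)]
    refine sum_congr rfl fun h _ => ?_
    simp only [rank, Function.comp_apply, Equiv.swap_apply_left]
    congr 4 with e
    rw [Equiv.sum_comp (Equiv.swap i₀ j) fun i => A (h i) (h j) e]
  have hcount : ∀ h : ι → M, ∑ j, rank h j ≤ ENNReal.ofReal (2 * c) := fun h => by
    simpa using sum_measure_le_of_forall_card_le μ
      (fun j => measurableSet_le (measurable_const.add
        (Finset.measurable_sum _ fun i _ => hAm _ _)) measurable_const)
      fun e => card_filter_half_add_sum_le (A := fun i j => A (h i) (h j) e)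
        (fun i j => hA _ _ e) (fun i j => hA0 _ _ e) c
  calc Fintype.card ι * ∑ h : ι → M, rank h i₀ * ∏ i, w (h i)
      = ∑ j, ∑ h : ι → M, rank h j * ∏ i, w (h i) := by
        simp only [← hsymm, sum_const, card_univ, nsmul_eq_mul]
    _ = ∑ h : ι → M, (∑ j, rank h j) * ∏ i, w (h i) := by
        rw [sum_comm]; simp only [sum_mul]
    _ ≤ ∑ h : ι → M, ENNReal.ofReal (2 * c) * ∏ i, w (h i) := by
        gcongr with h; exact hcount h
    _ = ENNReal.ofReal (2 * c) := by rw [← mul_sum, sum_prod_eq_one hw, mul_one]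

noncomputable def mcPValue {B : ℕ} (v : Fin B → ℝ) : ℝ := (1 + ∑ b, v b) / (1 + B)

@[fun_prop]
theorem measurable_mcPValue {B : ℕ} : Measurable (mcPValue (B := B)) := by
  unfold mcPValue; fun_prop

theorem sum_measure_mcPValue_le {M E : Type*} [Fintype M] [MeasurableSpace E]
    (μ : Measure E) [IsProbabilityMeasure μ] {w : M → ℝ≥0∞} (hw : ∑ x, w x = 1)
    {A : M → M → E → ℝ} (hA : ∀ x y e, A x y e + A y x e = 1) (hA0 : ∀ x y e, 0 ≤ A x y e)
    (hAm : ∀ x y, Measurable (A x y)) {m : ℕ} (t : ℝ) :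
    ∑ k : M × (Fin m → M), μ {e | mcPValue (fun b => A (k.2 b) k.1 e) ≤ t}
        * (w k.1 * ∏ b, w (k.2 b))
      ≤ ENNReal.ofReal (2 * t) := by
  have hreindex : ∑ k : M × (Fin m → M), μ {e | mcPValue (fun b => A (k.2 b) k.1 e) ≤ t}
        * (w k.1 * ∏ b, w (k.2 b))
      = ∑ h : Fin (m + 1) → M, μ {e | 2⁻¹ + ∑ i, A (h i) (h 0) e ≤ (1 + m) * t}
        * ∏ i, w (h i) := by
    rw [← (Fin.consEquiv fun _ => M).sum_comp]
    refine Fintype.sum_congr _ _ fun k => ?_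
    simp only [Fin.consEquiv_apply, Fin.prod_univ_succ, Fin.sum_univ_succ, Fin.cons_zero,
      Fin.cons_succ]
    congr 3 with e
    have hdiag : A k.1 k.1 e = 2⁻¹ := by linarith [hA k.1 k.1 e]
    rw [mcPValue, div_le_iff₀ (by positivity), hdiag]
    constructor <;> intro <;> linarith
  have hbound := card_mul_sum_measure_rank_le μ hw hA hA0 hAm (0 : Fin (m + 1)) ((1 + m) * t)
  rw [Fintype.card_fin, ← hreindex, show 2 * ((1 + m) * t) = ((m + 1 : ℕ) : ℝ) * (2 * t) by
    push_cast; ring, ENNReal.ofReal_mul (by positivity), ENNReal.ofReal_natCast] at hbound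
  exact (ENNReal.mul_le_mul_iff_right (by simp) (by simp)).mp hbound

section DiscreteIndependent

variable {Ω E K : Type*} {ε : Ω → E} {X : Ω → K}

theorem setOf_mem_apply_eq_iUnion (s : K → Set E) :
    {ω | ε ω ∈ s (X ω)} = ⋃ k, {ω | ε ω ∈ s k ∧ X ω = k} := by
  ext ω
  simp only [Set.mem_iUnion]
  exact ⟨fun h => ⟨X ω, h, rfl⟩, by rintro ⟨k, h, rfl⟩; exact h⟩

variable [MeasurableSpace Ω] [MeasurableSpace E]

theorem measurableSet_setOf_mem_apply [Countable K] (hε : Measurable ε)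
    (hX : ∀ k, MeasurableSet {ω | X ω = k}) {s : K → Set E} (hs : ∀ k, MeasurableSet (s k)) :
    MeasurableSet {ω | ε ω ∈ s (X ω)} := by
  rw [setOf_mem_apply_eq_iUnion]
  exact .iUnion fun k => (hε (hs k)).inter (hX k)

theorem measurable_apply_apply [Countable K] {β : Type*} [MeasurableSpace β]
    (hε : Measurable ε) (hX : ∀ k, MeasurableSet {ω | X ω = k}) {Φ : K → E → β}
    (hΦ : ∀ k, Measurable (Φ k)) : Measurable fun ω => Φ (X ω) (ε ω) :=
  fun _ ht => measurableSet_setOf_mem_apply hε hX fun k => hΦ k ht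

variable [Fintype K] {P : Measure Ω} {w : K → ℝ≥0∞}

theorem measure_setOf_mem_apply (hε : Measurable ε) (hX : ∀ k, MeasurableSet {ω | X ω = k})
    (hjoint : ∀ s, MeasurableSet s → ∀ k, P {ω | ε ω ∈ s ∧ X ω = k} = P {ω | ε ω ∈ s} * w k)
    {s : K → Set E} (hs : ∀ k, MeasurableSet (s k)) :
    P {ω | ε ω ∈ s (X ω)} = ∑ k, P {ω | ε ω ∈ s k} * w k := by
  have hdisj : Pairwise (Function.onFun Disjoint fun k => {ω | ε ω ∈ s k ∧ X ω = k}) :=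
    fun k l hkl => Set.disjoint_left.mpr fun ω hk hl => hkl (hk.2.symm.trans hl.2)
  rw [setOf_mem_apply_eq_iUnion, measure_iUnion hdisj fun k => (hε (hs k)).inter (hX k),
    tsum_fintype]
  exact Finset.sum_congr rfl fun k _ => hjoint _ (hs k) k

variable {β : Type*} [MeasurableSpace β] {Φ : K → E → β}

theorem measure_apply_equiv_apply_mem_eq (hε : Measurable ε)
    (hX : ∀ k, MeasurableSet {ω | X ω = k})
    (hjoint : ∀ s, MeasurableSet s → ∀ k, P {ω | ε ω ∈ s ∧ X ω = k} = P {ω | ε ω ∈ s} * w k)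
    (hΦ : ∀ k, Measurable (Φ k)) (e : K ≃ K) (hw : ∀ k, w (e k) = w k) {t : Set β}
    (ht : MeasurableSet t) : P {ω | Φ (e (X ω)) (ε ω) ∈ t} = P {ω | Φ (X ω) (ε ω) ∈ t} :=
  calc P {ω | ε ω ∈ Φ (e (X ω)) ⁻¹' t}
      = ∑ k, P {ω | ε ω ∈ Φ (e k) ⁻¹' t} * w k :=
        measure_setOf_mem_apply hε hX hjoint fun k => hΦ _ ht
    _ = ∑ k, P {ω | ε ω ∈ Φ k ⁻¹' t} * w k := Fintype.sum_equiv e _ _ fun k => by rw [hw]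
    _ = P {ω | ε ω ∈ Φ (X ω) ⁻¹' t} :=
        (measure_setOf_mem_apply hε hX hjoint fun k => hΦ _ ht).symm

theorem map_apply_equiv_apply_eq (hε : Measurable ε) (hX : ∀ k, MeasurableSet {ω | X ω = k})
    (hjoint : ∀ s, MeasurableSet s → ∀ k, P {ω | ε ω ∈ s ∧ X ω = k} = P {ω | ε ω ∈ s} * w k)
    (hΦ : ∀ k, Measurable (Φ k)) (e : K ≃ K) (hw : ∀ k, w (e k) = w k) :
    P.map (fun ω => Φ (e (X ω)) (ε ω)) = P.map (fun ω => Φ (X ω) (ε ω)) := by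
  ext t ht
  rw [Measure.map_apply (measurable_apply_apply hε hX fun k => hΦ (e k)) ht,
    Measure.map_apply (measurable_apply_apply hε hX hΦ) ht]
  exact measure_apply_equiv_apply_mem_eq hε hX hjoint hΦ e hw ht

end DiscreteIndependent

theorem measure_comparison_mul_inv_mem_eq {ι Ω : Type*} [MeasurableSpace Ω] {P : Measure Ω}
    {a : Equiv.Perm ι → Equiv.Perm ι → (ι → ℝ) → ℝ} (hameas : ∀ τ σ, Measurable (a τ σ))
    (haequi : ∀ (π₁ π₂ ρ : Equiv.Perm ι) (e : ι → ℝ),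
      a π₁ π₂ (fun i => e (ρ i)) = a (π₁ * ρ⁻¹) (π₂ * ρ⁻¹) e)
    {ε : Ω → ι → ℝ} (hε : Measurable ε) {τ : Equiv.Perm ι}
    (hτ : P.map (fun ω i => ε ω (τ i)) = P.map ε) {S : Set (Equiv.Perm ι → ℝ)}
    (hS : MeasurableSet S) :
    P {ω | (fun π => a (π * τ⁻¹) 1 (ε ω)) ∈ S} = P {ω | (fun π => a π τ (ε ω)) ∈ S} := by
  set Ψ : (ι → ℝ) → Equiv.Perm ι → ℝ := fun e π => a π τ e
  have hΨ : Measurable Ψ := by fun_prop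
  have hshift : {ω | (fun π => a (π * τ⁻¹) 1 (ε ω)) ∈ S}
      = (fun ω i => ε ω (τ i)) ⁻¹' (Ψ ⁻¹' S) := by
    ext ω; simp [Ψ, haequi]
  rw [hshift, ← Measure.map_apply (by fun_prop) (hΨ hS), hτ, Measure.map_apply hε (hΨ hS)]
  rfl

noncomputable def subgroupUniform {M : Type*} [Group M] (G : Subgroup M) (x : M) : ℝ :=
  if x ∈ G then (Nat.card G : ℝ)⁻¹ else 0

theorem sum_ofReal_subgroupUniform {M : Type*} [Group M] [Fintype M] (G : Subgroup M) :
    ∑ x, ENNReal.ofReal (subgroupUniform G x) = 1 := by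
  have hG : (Nat.card G : ℝ) ≠ 0 := by exact_mod_cast Nat.card_pos.ne'
  have hsum : ∑ x, subgroupUniform G x = 1 := by
    simpa [subgroupUniform, Finset.sum_ite, Nat.card_eq_fintype_card, Fintype.card_subtype]
      using mul_inv_cancel₀ hG
  rw [← ENNReal.ofReal_sum_of_nonneg fun x _ => by unfold subgroupUniform; split <;> positivity,
    hsum, ENNReal.ofReal_one]

theorem ofReal_subgroupUniform_mul_prod_mul_inv {M ι : Type*} [Group M] [Fintype ι]
    (G : Subgroup M) (τ : M) (g : ι → M) :
    ENNReal.ofReal (subgroupUniform G τ) * ∏ b, ENNReal.ofReal (subgroupUniform G (g b * τ⁻¹))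
      = ENNReal.ofReal (subgroupUniform G τ) * ∏ b, ENNReal.ofReal (subgroupUniform G (g b)) := by
  by_cases hτ : τ ∈ G
  · simp only [subgroupUniform, mul_mem_cancel_right (inv_mem hτ)]
  · simp [subgroupUniform, hτ]

theorem monteCarlo_pvalue_subgroup_validity_general
    {n B : ℕ}
    (a : Equiv.Perm (Fin n) → Equiv.Perm (Fin n) → (Fin n → ℝ) → ℝ)
    (ha01 : ∀ τ σ e, a τ σ e ∈ Set.Icc (0 : ℝ) 1)
    (hameas : ∀ τ σ, Measurable (a τ σ))
    (hasym : ∀ τ σ e, a τ σ e + a σ τ e = 1)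
    (haequi : ∀ (π₁ π₂ ρ : Equiv.Perm (Fin n)) (e : Fin n → ℝ),
      a π₁ π₂ (fun i => e (ρ i)) = a (π₁ * ρ⁻¹) (π₂ * ρ⁻¹) e)
    (G : Subgroup (Equiv.Perm (Fin n)))
    -- the uniform pmf on `G`:
    (f : Equiv.Perm (Fin n) → ℝ)
    (hf : ∀ π, f π = if π ∈ G then ((Nat.card G : ℝ))⁻¹ else 0)
    {Ω : Type*} [MeasurableSpace Ω] (P : Measure Ω) [IsProbabilityMeasure P]
    (ε : Ω → Fin n → ℝ) (hε : Measurable ε)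
    (hexch : ∀ π : Equiv.Perm (Fin n),
      Measure.map (fun ω => fun i => ε ω (π i)) P = Measure.map ε P)
    (σ : Ω → Equiv.Perm (Fin n)) (perms : Ω → Fin B → Equiv.Perm (Fin n))
    (hσmeas : ∀ τ : Equiv.Perm (Fin n), MeasurableSet {ω | σ ω = τ})
    (hpermsMeas : ∀ g : Fin B → Equiv.Perm (Fin n), MeasurableSet {ω | perms ω = g})
    -- `σ, π₁, …, π_B` are i.i.d. uniform on `G`, independent of `ε`:
    (hiid : ∀ s : Set (Fin n → ℝ), MeasurableSet s →
      ∀ (τ : Equiv.Perm (Fin n)) (g : Fin B → Equiv.Perm (Fin n)),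
      P {ω | ε ω ∈ s ∧ σ ω = τ ∧ perms ω = g}
        = P {ω | ε ω ∈ s} * ENNReal.ofReal (f τ)
            * ∏ b : Fin B, ENNReal.ofReal (f (g b)))
    (α : ℝ) :
    Measure.map
        (fun ω => (1 + ∑ b : Fin B, a (perms ω b * (σ ω)⁻¹) 1 (ε ω)) / (1 + B)) P
      = Measure.map
        (fun ω => (1 + ∑ b : Fin B, a (perms ω b) 1 (ε ω)) / (1 + B)) P
    ∧ P {ω | (1 + ∑ b : Fin B, a (perms ω b) 1 (ε ω)) / (1 + B) ≤ α}
        ≤ ENNReal.ofReal (2 * α) := by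
  obtain rfl : f = subgroupUniform G := funext hf
  set X : Ω → Equiv.Perm (Fin n) × (Fin B → Equiv.Perm (Fin n)) := fun ω => (σ ω, perms ω)
  have hX : ∀ k, MeasurableSet {ω | X ω = k} := fun k => by
    simpa only [X, Prod.ext_iff, Set.ofPred_and] using (hσmeas k.1).inter (hpermsMeas k.2)
  set W : Equiv.Perm (Fin n) × (Fin B → Equiv.Perm (Fin n)) → ℝ≥0∞ := fun k =>
    ENNReal.ofReal (subgroupUniform G k.1) * ∏ b, ENNReal.ofReal (subgroupUniform G (k.2 b))
  have hjoint : ∀ s, MeasurableSet s → ∀ k, P {ω | ε ω ∈ s ∧ X ω = k}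
      = P {ω | ε ω ∈ s} * W k := fun s hs k => by
    simpa only [X, Prod.ext_iff, mul_assoc] using hiid s hs k.1 k.2
  have hpvalue : ∀ k : Equiv.Perm (Fin n) × (Fin B → Equiv.Perm (Fin n)),
      Measurable fun e => mcPValue fun b => a (k.2 b) 1 e := fun k => by fun_prop
  set shear : Equiv.Perm (Fin n) × (Fin B → Equiv.Perm (Fin n)) ≃ _ :=
    .prodShear (.refl _) fun τ => .piCongrRight fun _ => .mulRight τ⁻¹
  have hshear : ∀ k, W (shear k) = W k := fun k =>
    ofReal_subgroupUniform_mul_prod_mul_inv G k.1 k.2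
  refine ⟨map_apply_equiv_apply_eq hε hX hjoint hpvalue shear hshear, ?_⟩
  calc P {ω | (1 + ∑ b : Fin B, a (perms ω b) 1 (ε ω)) / (1 + B) ≤ α}
      = P {ω | mcPValue (fun b => a (perms ω b * (σ ω)⁻¹) 1 (ε ω)) ≤ α} :=
        (measure_apply_equiv_apply_mem_eq hε hX hjoint hpvalue shear hshear
          measurableSet_Iic).symm
    _ = ∑ k, P {ω | mcPValue (fun b => a (k.2 b * k.1⁻¹) 1 (ε ω)) ≤ α} * W k :=
        measure_setOf_mem_apply (s := fun k => {e | mcPValue (fun b => a (k.2 b * k.1⁻¹) 1 e) ≤ α})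
          hε hX hjoint fun k => hpvalue (shear k) measurableSet_Iic
    _ = ∑ k, P {ω | mcPValue (fun b => a (k.2 b) k.1 (ε ω)) ≤ α} * W k :=
        Finset.sum_congr rfl fun k _ => congrArg (· * _) <|
          measure_comparison_mul_inv_mem_eq (S := {v | mcPValue (fun b => v (k.2 b)) ≤ α}) hameas
            haequi hε (hexch k.1) (measurableSet_le (by fun_prop) measurable_const)
    _ ≤ ENNReal.ofReal (2 * α) :=
        sum_measure_mcPValue_le P (sum_ofReal_subgroupUniform G)
          (A := fun x y ω => a x y (ε ω)) (fun x y ω => hasym x y (ε ω))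
          (fun x y ω => (ha01 x y (ε ω)).1) (fun x y => by fun_prop) α

/-- **Monte-Carlo p-value with i.i.d. uniform permutations on a subgroup.**
If `σ, π₁, …, π_B` are i.i.d. uniform on a subgroup `G ≤ S_n`, independent of the
exchangeable vector `ε`, then `p^MC(σ)` has the same distribution as `p^MC(Id)`,
and consequently `P(p^MC(Id) ≤ α) ≤ 2α`, a probability over `ε` and `π₁,…,π_B`. -/
theorem monteCarlo_pvalue_subgroup_validity
    {n B : ℕ} (hn : 1 ≤ n)
    (a : Equiv.Perm (Fin n) → Equiv.Perm (Fin n) → (Fin n → ℝ) → ℝ)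
    (ha01 : ∀ τ σ e, a τ σ e ∈ Set.Icc (0 : ℝ) 1)
    (hameas : ∀ τ σ, Measurable (a τ σ))
    (hasym : ∀ τ σ e, a τ σ e + a σ τ e = 1)
    (haequi : ∀ (π₁ π₂ ρ : Equiv.Perm (Fin n)) (e : Fin n → ℝ),
      a π₁ π₂ (fun i => e (ρ i)) = a (π₁ * ρ⁻¹) (π₂ * ρ⁻¹) e)
    (G : Subgroup (Equiv.Perm (Fin n)))
    -- the uniform pmf on `G`:
    (f : Equiv.Perm (Fin n) → ℝ)
    (hf : ∀ π, f π = if π ∈ G then ((Nat.card G : ℝ))⁻¹ else 0)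
    {Ω : Type*} [MeasurableSpace Ω] (P : Measure Ω) [IsProbabilityMeasure P]
    (ε : Ω → Fin n → ℝ) (hε : Measurable ε)
    (hexch : ∀ π : Equiv.Perm (Fin n),
      Measure.map (fun ω => fun i => ε ω (π i)) P = Measure.map ε P)
    (σ : Ω → Equiv.Perm (Fin n)) (perms : Ω → Fin B → Equiv.Perm (Fin n))
    (hσmeas : ∀ τ : Equiv.Perm (Fin n), MeasurableSet {ω | σ ω = τ})
    (hpermsMeas : ∀ g : Fin B → Equiv.Perm (Fin n), MeasurableSet {ω | perms ω = g})
    -- `σ, π₁, …, π_B` are i.i.d. uniform on `G`, independent of `ε`: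
    (hiid : ∀ s : Set (Fin n → ℝ), MeasurableSet s →
      ∀ (τ : Equiv.Perm (Fin n)) (g : Fin B → Equiv.Perm (Fin n)),
      P {ω | ε ω ∈ s ∧ σ ω = τ ∧ perms ω = g}
        = P {ω | ε ω ∈ s} * ENNReal.ofReal (f τ)
            * ∏ b : Fin B, ENNReal.ofReal (f (g b)))
    (α : ℝ) (hα : α ∈ Set.Icc (0 : ℝ) 1) :
    Measure.map
        (fun ω => (1 + ∑ b : Fin B, a (perms ω b * (σ ω)⁻¹) 1 (ε ω)) / (1 + B)) P
      = Measure.map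
        (fun ω => (1 + ∑ b : Fin B, a (perms ω b) 1 (ε ω)) / (1 + B)) P
    ∧ P {ω | (1 + ∑ b : Fin B, a (perms ω b) 1 (ε ω)) / (1 + B) ≤ α}
        ≤ ENNReal.ofReal (2 * α) :=
  monteCarlo_pvalue_subgroup_validity_general a ha01 hameas hasym haequi G f hf P ε hε hexch σ perms
    hσmeas hpermsMeas hiid α
end

section
/- Let m ≥ 1 and let A ∈ [0,1]^{m×m} be a matrix with A_{ij} + A_{ji} = 1 for all i, j ∈ {1,…,m}. Let w₁, …, w_m ∈ [0,1] satisfy Σ_{j=1}^m w_j = 1, and fix α ∈ [0, 1/2]. Then Σ_{i=1}^m w_i · 1[Σ_{j=1}^m w_j A_{ji} ≤ α] ≤ 2α; equivalently, the set S = { i : Σ_{j=1}^m w_j A_{ij} ≥ 1 − α } = { i : Σ_{j=1}^m w_j A_{ji} ≤ α } satisfies Σ_{i ∈ S} w_i ≤ 2α. -/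
open scoped Classical

/-- **Weighted tournament lemma.**
If `A ∈ [0,1]^{m×m}` satisfies `A i j + A j i = 1`, the weights `w i ∈ [0,1]`
sum to `1`, and `α ∈ [0, 1/2]`, then the total weight of the indices `i` with
weighted column sum `Σ_j w j * A j i ≤ α` is at most `2α`; equivalently, the set
`S = {i : Σ_j w j * A i j ≥ 1 - α} = {i : Σ_j w j * A j i ≤ α}` satisfies
`Σ_{i ∈ S} w i ≤ 2α`. -/
theorem weighted_tournament_lemma
    {m : ℕ} (hm : 1 ≤ m)
    (A : Matrix (Fin m) (Fin m) ℝ)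
    (hA01 : ∀ i j, A i j ∈ Set.Icc (0 : ℝ) 1)
    (hAanti : ∀ i j, A i j + A j i = 1)
    (w : Fin m → ℝ) (hw01 : ∀ i, w i ∈ Set.Icc (0 : ℝ) 1)
    (hw1 : ∑ j : Fin m, w j = 1)
    (α : ℝ) (hα : α ∈ Set.Icc (0 : ℝ) (1 / 2)) :
    (∑ i : Fin m, w i * (if ∑ j : Fin m, w j * A j i ≤ α then (1 : ℝ) else 0) ≤ 2 * α)
    ∧ ({i : Fin m | ∑ j : Fin m, w j * A i j ≥ 1 - α}
        = {i : Fin m | ∑ j : Fin m, w j * A j i ≤ α})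
    ∧ (∑ i ∈ Finset.univ.filter (fun i : Fin m => ∑ j : Fin m, w j * A j i ≤ α), w i
        ≤ 2 * α) := by
  obtain ⟨hα0, hα2⟩ := hα
  have hW0 : ∀ i, 0 ≤ w i := fun i => (hw01 i).1
  set S := Finset.univ.filter (fun i : Fin m => ∑ j : Fin m, w j * A j i ≤ α) with hS
  have hset : ({i : Fin m | ∑ j : Fin m, w j * A i j ≥ 1 - α}
        = {i : Fin m | ∑ j : Fin m, w j * A j i ≤ α}) := by
    ext i
    simp only [Set.mem_setOf_eq, ge_iff_le]
    have h : ∑ j : Fin m, w j * A i j = 1 - ∑ j : Fin m, w j * A j i := by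
      rw [← hw1, ← Finset.sum_sub_distrib]
      exact Finset.sum_congr rfl fun j _ => by linear_combination w j * hAanti i j
    rw [h]; constructor <;> intro <;> linarith
  set W := ∑ i ∈ S, w i with hWdef
  have hWge : 0 ≤ W := Finset.sum_nonneg fun i _ => hW0 i
  have h1 : ∑ i ∈ S, w i * ∑ j ∈ S, w j * A j i ≤ α * W := by
    rw [hWdef, Finset.mul_sum]
    apply Finset.sum_le_sum
    intro i hi
    have hiS : ∑ j : Fin m, w j * A j i ≤ α := (Finset.mem_filter.mp hi).2
    have hsub : ∑ j ∈ S, w j * A j i ≤ ∑ j : Fin m, w j * A j i := by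
      apply Finset.sum_le_sum_of_subset_of_nonneg (Finset.subset_univ S)
      intro j _ _
      exact mul_nonneg (hW0 j) (hA01 j i).1
    have := le_trans hsub hiS
    nlinarith [hW0 i]
  have swap : ∑ i ∈ S, ∑ j ∈ S, w i * (w j * A j i)
      = ∑ i ∈ S, ∑ j ∈ S, w i * (w j * A i j) := by
    rw [Finset.sum_comm]
    exact Finset.sum_congr rfl fun i _ => Finset.sum_congr rfl fun j _ => by ring
  have total : ∑ i ∈ S, ∑ j ∈ S, (w i * (w j * A j i) + w i * (w j * A i j)) = W * W := by
    have he : ∀ i ∈ S, ∀ j ∈ S, w i * (w j * A j i) + w i * (w j * A i j) = w i * w j := by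
      intro i _ j _; linear_combination (w i * w j) * hAanti i j
    rw [Finset.sum_congr rfl fun i hi => Finset.sum_congr rfl (he i hi)]
    rw [← Finset.sum_mul_sum]
  have h2 : ∑ i ∈ S, w i * ∑ j ∈ S, w j * A j i = W * W / 2 := by
    have : ∑ i ∈ S, ∑ j ∈ S, w i * (w j * A j i) = W * W / 2 := by
      have := total
      rw [Finset.sum_congr rfl fun i (_ : i ∈ S) => Finset.sum_add_distrib] at this
      rw [Finset.sum_add_distrib] at this
      linarith [swap, this]
    rw [← this]
    exact Finset.sum_congr rfl fun i _ => Finset.mul_sum _ _ _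
  have key : W * W / 2 ≤ α * W := h2 ▸ h1
  have hW : W ≤ 2 * α := by
    rcases eq_or_lt_of_le hWge with h | h
    · linarith
    · nlinarith
  refine ⟨?_, hset, hW⟩
  have heq : (∑ i : Fin m, w i * (if ∑ j : Fin m, w j * A j i ≤ α then (1 : ℝ) else 0)) = W := by
    rw [hWdef, hS, Finset.sum_filter]
    exact Finset.sum_congr rfl fun i _ => by split <;> ring
  rw [heq]; exact hW
end

section
/- Let n ≥ 1, let f be any probability mass function on S_n, and fix α ∈ [0, 1/2]. Let a : S_n × S_n → [0,1] satisfy a(π, τ) + a(τ, π) = 1 for all π, τ ∈ S_n. Then Σ_{τ ∈ S_n} f(τ) · 1[ Σ_{π ∈ S_n} f(π) a(π, τ) ≤ α ] ≤ 2α. -/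
open scoped Classical

/-- **Weighted tournament bound over permutations.**
For any pmf `f` on `S_n`, any `α ∈ [0, 1/2]`, and any `a : S_n × S_n → [0,1]` with
`a π τ + a τ π = 1`, the total `f`-weight of permutations `τ` whose weighted
column sum `Σ_π f(π) a(π, τ)` is at most `α` is itself at most `2α`. -/
theorem tournament_bound_permutations
    {n : ℕ} (hn : 1 ≤ n)
    (f : Equiv.Perm (Fin n) → ℝ)
    (hf01 : ∀ π, f π ∈ Set.Icc (0 : ℝ) 1)
    (hf1 : ∑ π : Equiv.Perm (Fin n), f π = 1)
    (α : ℝ) (hα : α ∈ Set.Icc (0 : ℝ) (1 / 2))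
    (a : Equiv.Perm (Fin n) → Equiv.Perm (Fin n) → ℝ)
    (ha01 : ∀ π τ, a π τ ∈ Set.Icc (0 : ℝ) 1)
    (haanti : ∀ π τ, a π τ + a τ π = 1) :
    ∑ τ : Equiv.Perm (Fin n),
        f τ * (if ∑ π : Equiv.Perm (Fin n), f π * a π τ ≤ α then (1 : ℝ) else 0)
      ≤ 2 * α := by
  classical
  set B : Finset (Equiv.Perm (Fin n)) :=
    Finset.univ.filter (fun τ => ∑ π : Equiv.Perm (Fin n), f π * a π τ ≤ α) with hB
  have hfnn : ∀ π, 0 ≤ f π := fun π => (hf01 π).1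
  have hann : ∀ π τ, 0 ≤ a π τ := fun π τ => (ha01 π τ).1
  have hLHS : (∑ τ : Equiv.Perm (Fin n),
      f τ * (if ∑ π : Equiv.Perm (Fin n), f π * a π τ ≤ α then (1:ℝ) else 0))
      = ∑ τ ∈ B, f τ := by
    rw [hB, Finset.sum_filter]
    apply Finset.sum_congr rfl
    intro τ _
    by_cases h : ∑ π : Equiv.Perm (Fin n), f π * a π τ ≤ α <;> simp [h]
  rw [hLHS]
  set F : ℝ := ∑ τ ∈ B, f τ with hF
  have hFnn : 0 ≤ F := Finset.sum_nonneg fun τ _ => hfnn τ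
  have key : F * F ≤ 2 * (α * F) := by
    have h1 : ∑ τ ∈ B, f τ * (∑ π ∈ B, f π * a π τ) ≤ α * F := by
      rw [hF, Finset.mul_sum]
      apply Finset.sum_le_sum
      intro τ hτ
      have hPτ : ∑ π : Equiv.Perm (Fin n), f π * a π τ ≤ α :=
        (Finset.mem_filter.mp hτ).2
      have hsub : ∑ π ∈ B, f π * a π τ ≤ ∑ π : Equiv.Perm (Fin n), f π * a π τ :=
        Finset.sum_le_sum_of_subset_of_nonneg (Finset.filter_subset _ _)
          (fun π _ _ => mul_nonneg (hfnn π) (hann π τ))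
      have hle : ∑ π ∈ B, f π * a π τ ≤ α := le_trans hsub hPτ
      calc f τ * (∑ π ∈ B, f π * a π τ) ≤ f τ * α :=
            mul_le_mul_of_nonneg_left hle (hfnn τ)
        _ = α * f τ := mul_comm _ _
    have h2 : ∑ τ ∈ B, f τ * (∑ π ∈ B, f π * a π τ)
        = ∑ τ ∈ B, ∑ π ∈ B, f τ * f π * a π τ := by
      apply Finset.sum_congr rfl
      intro τ _
      rw [Finset.mul_sum]
      apply Finset.sum_congr rfl
      intro π _
      ring
    have h3 : 2 * ∑ τ ∈ B, ∑ π ∈ B, f τ * f π * a π τ = F * F := by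
      have hswap : ∑ τ ∈ B, ∑ π ∈ B, f τ * f π * a π τ
          = ∑ τ ∈ B, ∑ π ∈ B, f τ * f π * a τ π := by
        rw [Finset.sum_comm]
        apply Finset.sum_congr rfl; intro τ _
        apply Finset.sum_congr rfl; intro π _
        ring_nf
      have h2m : 2 * ∑ τ ∈ B, ∑ π ∈ B, f τ * f π * a π τ
          = ∑ τ ∈ B, ∑ π ∈ B, (f τ * f π * a π τ + f τ * f π * a τ π) := by
        rw [two_mul]
        nth_rewrite 2 [hswap]
        rw [← Finset.sum_add_distrib]
        apply Finset.sum_congr rfl; intro τ _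
        rw [← Finset.sum_add_distrib]
      rw [h2m]
      have hterm : ∀ τ ∈ B, ∀ π ∈ B,
          f τ * f π * a π τ + f τ * f π * a τ π = f τ * f π := by
        intro τ _ π _
        rw [← mul_add, haanti π τ, mul_one]
      rw [Finset.sum_congr rfl fun τ hτ => Finset.sum_congr rfl fun π hπ => hterm τ hτ π hπ]
      rw [← Finset.sum_mul_sum]
    calc F * F = 2 * ∑ τ ∈ B, ∑ π ∈ B, f τ * f π * a π τ := h3.symm
      _ = 2 * ∑ τ ∈ B, f τ * (∑ π ∈ B, f π * a π τ) := by rw [h2]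
      _ ≤ 2 * (α * F) := by linarith [h1]
  rcases eq_or_lt_of_le hFnn with h | h
  · rw [← h]; linarith [hα.1]
  · nlinarith [key]
end
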